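/- arXiv:2208.08179 — 3 statements merged into one kernel-verified Lean document; each statement's English description precedes it below -/
import Mathlib

section
/- For every N ≥ 1, there exists a choice of complex parameters a_{j,i}, b_{j,i} (with all coupling parameters c_{j,i} = d_{j,i} = 0) such that the system f_i(u,v) = a_{1,i}u_i(u_i²+v_i²) + a_{2,i}u_i + a_{3,i}v_i + a_{4,i} = 0, g_i(u,v) = b_{1,i}v_i(u_i²+v_i²) + b_{2,i}u_i + b_{3,i}v_i + b_{4,i} = 0 for i = 1,…,N has exactly 5^N solutions in ℂ^{2N}. -/
/-!
Take every factor to be `u (u² + v²) + 2 v = 0`, `v (u² + v²) + 2 u = 0` (the coefficient `2`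
instead of `1` only rescales the solutions to Gaussian integers). Eliminating the cubic terms gives
`v² = u²`, and on the lines `v = u` and `v = -u` the system reduces to `u (u² + 1) = 0` and
`u (u² - 1) = 0`, so each factor has the five solutions `(0, 0), ±(I, I), ±(1, -1)`. The solution
set of the decoupled system is the `N`-fold product of these, of cardinality `5 ^ N`.
-/

open Complex

theorem Set.ncard_setOf_forall_apply_mem {ι α β : Type*} [Fintype ι] (S : Set (α × β)) :
    {w : (ι → α) × (ι → β) | ∀ i, (w.1 i, w.2 i) ∈ S}.ncard = S.ncard ^ Fintype.card ι := by
  let e : {w : (ι → α) × (ι → β) | ∀ i, (w.1 i, w.2 i) ∈ S} ≃ (ι → S) :=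
    { toFun := fun w i => ⟨(w.1.1 i, w.1.2 i), w.2 i⟩
      invFun := fun f => ⟨(fun i => (f i).1.1, fun i => (f i).1.2), fun i => (f i).2⟩
      left_inv := fun _ => rfl
      right_inv := fun _ => rfl }
  rw [← Nat.card_coe_set_eq, Nat.card_congr e, Nat.card_fun, Nat.card_coe_set_eq,
    Nat.card_eq_fintype_card]

def modelCubicPairZeros : Set (ℂ × ℂ) :=
  {p | p.1 * (p.1 ^ 2 + p.2 ^ 2) + 2 * p.2 = 0 ∧ p.2 * (p.1 ^ 2 + p.2 ^ 2) + 2 * p.1 = 0}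

theorem mem_modelCubicPairZeros_iff (u v : ℂ) :
    (u, v) ∈ modelCubicPairZeros ↔
      (v = u ∧ u * (u - I) * (u + I) = 0) ∨ (v = -u ∧ u * (u - 1) * (u + 1) = 0) := by
  simp only [modelCubicPairZeros, Set.mem_ofPred_eq]
  constructor
  · rintro ⟨hf, hg⟩
    have hdiag : (v - u) * (v + u) = 0 := by linear_combination (v * hf - u * hg) / 2
    rcases mul_eq_zero.1 hdiag with h | h
    · obtain rfl : u = v := (sub_eq_zero.1 h).symm
      exact Or.inl ⟨rfl, by linear_combination hf / 2 - u * I_sq⟩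
    · obtain rfl : v = -u := eq_neg_of_add_eq_zero_left h
      exact Or.inr ⟨rfl, by linear_combination hf / 2⟩
  · rintro (⟨hv, h⟩ | ⟨rfl, h⟩)
    · subst v
      constructor <;> linear_combination 2 * h + 2 * u * I_sq
    · exact ⟨by linear_combination 2 * h, by linear_combination (-2) * h⟩

theorem modelCubicPairZeros_eq :
    modelCubicPairZeros = {(0, 0), (I, I), (-I, -I), (1, -1), (-1, 1)} := by
  ext ⟨u, v⟩
  simp only [mem_modelCubicPairZeros_iff, mul_eq_zero, sub_eq_zero, add_eq_zero_iff_eq_neg,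
    Set.mem_insert_iff, Set.mem_singleton_iff, Prod.mk.injEq]
  constructor
  · rintro (⟨rfl, (rfl | rfl) | rfl⟩ | ⟨rfl, (rfl | rfl) | rfl⟩) <;> simp
  · rintro (⟨rfl, rfl⟩ | ⟨rfl, rfl⟩ | ⟨rfl, rfl⟩ | ⟨rfl, rfl⟩ | ⟨rfl, rfl⟩) <;> simp

theorem ncard_modelCubicPairZeros : modelCubicPairZeros.ncard = 5 := by
  rw [modelCubicPairZeros_eq, Set.ncard_insert_of_notMem, Set.ncard_insert_of_notMem,
    Set.ncard_insert_of_notMem, Set.ncard_insert_of_notMem, Set.ncard_singleton]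
  all_goals norm_num [Prod.ext_iff, Complex.ext_iff]

theorem decoupled_system_five_pow_N_solutions_general (N : ℕ) :
    ∃ a b : Fin N → Fin 4 → ℂ,
      ({w : (Fin N → ℂ) × (Fin N → ℂ) | ∀ i : Fin N,
          a i 0 * w.1 i * ((w.1 i) ^ 2 + (w.2 i) ^ 2) + a i 1 * w.1 i + a i 2 * w.2 i
              + a i 3 = 0 ∧
          b i 0 * w.2 i * ((w.1 i) ^ 2 + (w.2 i) ^ 2) + b i 1 * w.1 i + b i 2 * w.2 i
              + b i 3 = 0}).ncard = 5 ^ N := by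
  refine ⟨fun _ => ![1, 0, 2, 0], fun _ => ![1, 2, 0, 0], ?_⟩
  convert Set.ncard_setOf_forall_apply_mem (ι := Fin N) modelCubicPairZeros using 1
  · congr! 4 with w i
    simp [modelCubicPairZeros]
  · rw [ncard_modelCubicPairZeros, Fintype.card_fin]

/-- For every `N ≥ 1` there are complex parameters `a_{j,i}, b_{j,i}` (with all coupling
parameters zero) such that the decoupled system
`a_{1,i} u_i(u_i²+v_i²) + a_{2,i} u_i + a_{3,i} v_i + a_{4,i} = 0`,
`b_{1,i} v_i(u_i²+v_i²) + b_{2,i} u_i + b_{3,i} v_i + b_{4,i} = 0`, `i = 1,…,N`,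
has exactly `5^N` solutions in `ℂ^{2N}`. -/
theorem decoupled_system_five_pow_N_solutions (N : ℕ) (hN : 1 ≤ N) :
    ∃ a b : Fin N → Fin 4 → ℂ,
      ({w : (Fin N → ℂ) × (Fin N → ℂ) | ∀ i : Fin N,
          a i 0 * w.1 i * ((w.1 i) ^ 2 + (w.2 i) ^ 2) + a i 1 * w.1 i + a i 2 * w.2 i
              + a i 3 = 0 ∧
          b i 0 * w.2 i * ((w.1 i) ^ 2 + (w.2 i) ^ 2) + b i 1 * w.1 i + b i 2 * w.2 i
              + b i 3 = 0}).ncard = 5 ^ N :=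
  decoupled_system_five_pow_N_solutions_general N
end

section
/- The kernel of the ring homomorphism ℂ[y₁,y₂,y₃,y₄] → ℂ[u,v] sending y₁ ↦ u, y₂ ↦ v, y₃ ↦ uv², y₄ ↦ v³ contains the five binomials y₁y₂² - y₃, y₂³ - y₄, y₁y₄ - y₂y₃, y₁²y₂y₄ - y₃², y₁³y₄² - y₃³, and these binomials generate the kernel. -/
open MvPolynomial

/-- The kernel of the ring map `ℂ[y₁,y₂,y₃,y₄] → ℂ[u,v]`, `y₁ ↦ u`, `y₂ ↦ v`, `y₃ ↦ uv²`,
`y₄ ↦ v³`, is generated by the five binomials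
`y₁y₂² - y₃`, `y₂³ - y₄`, `y₁y₄ - y₂y₃`, `y₁²y₂y₄ - y₃²`, `y₁³y₄² - y₃³`.
(Variables `y₁,…,y₄` are `X 0,…,X 3` and `u, v` are `X 0, X 1`.) -/
theorem toric_ideal_of_single_oscillator :
    RingHom.ker ((MvPolynomial.aeval
        (![X 0, X 1, X 0 * X 1 ^ 2, X 1 ^ 3] : Fin 4 → MvPolynomial (Fin 2) ℂ) :
        MvPolynomial (Fin 4) ℂ →ₐ[ℂ] MvPolynomial (Fin 2) ℂ) :
        MvPolynomial (Fin 4) ℂ →+* MvPolynomial (Fin 2) ℂ) =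
      Ideal.span
        ({X 0 * X 1 ^ 2 - X 2, X 1 ^ 3 - X 3, X 0 * X 3 - X 1 * X 2,
          X 0 ^ 2 * X 1 * X 3 - X 2 ^ 2, X 0 ^ 3 * X 3 ^ 2 - X 2 ^ 3} :
          Set (MvPolynomial (Fin 4) ℂ)) := by
  set f : MvPolynomial (Fin 4) ℂ →ₐ[ℂ] MvPolynomial (Fin 2) ℂ :=
    MvPolynomial.aeval ![X 0, X 1, X 0 * X 1 ^ 2, X 1 ^ 3]
  set σ : MvPolynomial (Fin 2) ℂ →ₐ[ℂ] MvPolynomial (Fin 4) ℂ :=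
    MvPolynomial.aeval ![X 0, X 1]
  set I : Ideal (MvPolynomial (Fin 4) ℂ) :=
    Ideal.span ({X 0 * X 1 ^ 2 - X 2, X 1 ^ 3 - X 3, X 0 * X 3 - X 1 * X 2,
      X 0 ^ 2 * X 1 * X 3 - X 2 ^ 2, X 0 ^ 3 * X 3 ^ 2 - X 2 ^ 3} :
      Set (MvPolynomial (Fin 4) ℂ)) with hI
  have h1 : (X 0 * X 1 ^ 2 - X 2 : MvPolynomial (Fin 4) ℂ) ∈ I := by
    apply Ideal.subset_span; simp
  have h2 : (X 1 ^ 3 - X 3 : MvPolynomial (Fin 4) ℂ) ∈ I := by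
    apply Ideal.subset_span; simp
  have key : ∀ p : MvPolynomial (Fin 4) ℂ, p - σ (f p) ∈ I := by
    have hcomp : (Ideal.Quotient.mkₐ ℂ I).comp (σ.comp f) = Ideal.Quotient.mkₐ ℂ I := by
      apply MvPolynomial.algHom_ext
      intro i
      fin_cases i <;> simp [f, σ]
      · rw [← map_pow, ← map_mul, Ideal.Quotient.mk_eq_mk_iff_sub_mem]
        exact h1
      · rw [← map_pow, Ideal.Quotient.mk_eq_mk_iff_sub_mem]
        exact h2
    intro p
    have := congrFun (congrArg DFunLike.coe hcomp) p
    simp only [AlgHom.comp_apply, Ideal.Quotient.mkₐ_eq_mk] at this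
    rw [← Ideal.Quotient.mk_eq_mk_iff_sub_mem]
    exact this.symm
  apply le_antisymm
  · intro p hp
    have hfp : f p = 0 := hp
    have := key p
    rwa [hfp, map_zero, sub_zero] at this
  · rw [Ideal.span_le]
    intro q hq
    simp only [Set.mem_insert_iff, Set.mem_singleton_iff] at hq
    have : f q = 0 := by
      rcases hq with rfl | rfl | rfl | rfl | rfl <;>
        · simp only [f, map_sub, map_mul, map_pow, aeval_X, Matrix.cons_val_zero,
            Matrix.cons_val_one, Matrix.head_cons, Matrix.cons_val_two, Matrix.tail_cons,
            Matrix.cons_val_three]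
          ring
    exact this
end

section
/- Let φ : ℤ_{≥0}^4 → ℤ² be the monoid homomorphism with φ(e₁) = (1,0), φ(e₂) = (0,1), φ(e₃) = (1,2), φ(e₄) = (0,3). The Graver basis of the associated toric ideal consists exactly of the five binomials y₁y₂² - y₃, y₂³ - y₄, y₁y₄ - y₂y₃, y₁²y₂y₄ - y₃², y₁³y₄² - y₃³; that is, these are precisely the primitive binomials of the toric ideal defined by the 2×4 matrix with columns (1,0), (0,1), (1,2), (0,3). -/
/-!
Coordinate `i` of an exponent vector is the exponent of `y_{i+1}`. The relations `(α, β)` of the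
matrix are those with `α - β = t • (-1, -2, 1, 0) + s • (0, -3, 0, 1)`. A case split on the signs
of `t` and of `2t + 3s` shows that every relation with `α ≠ β` dominates, coordinatewise, one of
the five listed pairs or its reverse, so only these can be primitive; each of them is primitive
because the exponent vectors below it are so few that no smaller relation fits.
-/

/-- `x^α - x^β` is a primitive binomial of the toric ideal of the matrix with columns `A i`. -/
def IsPrimitiveBinomial {d n : ℕ} (A : Fin n → Fin d → ℤ) (α β : Fin n → ℕ) : Prop :=
  α ≠ β ∧
  (∑ i, (α i : ℤ) • A i) = (∑ i, (β i : ℤ) • A i) ∧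
  ∀ α' β' : Fin n → ℕ, α' ≠ β' →
    (∑ i, (α' i : ℤ) • A i) = (∑ i, (β' i : ℤ) • A i) →
    (∀ i, α' i ≤ α i) → (∀ i, β' i ≤ β i) → α' = α ∧ β' = β

namespace IsPrimitiveBinomial

variable {d n : ℕ} {A : Fin n → Fin d → ℤ} {α β γ δ : Fin n → ℕ}

theorem symm (h : IsPrimitiveBinomial A α β) : IsPrimitiveBinomial A β α := by
  obtain ⟨hne, hrel, hmin⟩ := h
  refine ⟨hne.symm, hrel.symm, fun α' β' hne' hrel' hα hβ => ?_⟩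
  exact (hmin β' α' hne'.symm hrel'.symm hβ hα).symm

theorem eq_of_le (h : IsPrimitiveBinomial A α β) (h' : IsPrimitiveBinomial A γ δ)
    (hγ : γ ≤ α) (hδ : δ ≤ β) : γ = α ∧ δ = β :=
  h.2.2 γ δ h'.1 h'.2.1 hγ hδ

end IsPrimitiveBinomial

def oscillator : Fin 4 → Fin 2 → ℤ := ![![1, 0], ![0, 1], ![1, 2], ![0, 3]]

def graverPairs : Set ((Fin 4 → ℕ) × (Fin 4 → ℕ)) :=
  {(![1, 2, 0, 0], ![0, 0, 1, 0]), (![0, 3, 0, 0], ![0, 0, 0, 1]),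
    (![1, 0, 0, 1], ![0, 1, 1, 0]), (![2, 1, 0, 1], ![0, 0, 2, 0]),
    (![3, 0, 0, 2], ![0, 0, 3, 0])}

theorem sum_smul_oscillator (α : Fin 4 → ℕ) :
    ∑ i, (α i : ℤ) • oscillator i = ![(α 0 + α 2 : ℤ), α 1 + 2 * α 2 + 3 * α 3] := by
  ext j
  fin_cases j <;> simp [oscillator, Fin.sum_univ_four, mul_comm]

theorem sum_smul_oscillator_eq_iff (α β : Fin 4 → ℕ) :
    (∑ i, (α i : ℤ) • oscillator i) = ∑ i, (β i : ℤ) • oscillator i ↔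
      α 0 + α 2 = β 0 + β 2 ∧ α 1 + 2 * α 2 + 3 * α 3 = β 1 + 2 * β 2 + 3 * β 3 := by
  rw [sum_smul_oscillator, sum_smul_oscillator, funext_iff, Fin.forall_fin_two]
  simp only [Matrix.cons_val_zero, Matrix.cons_val_one]
  omega

theorem vec_le_iff {a b c e : ℕ} {α : Fin 4 → ℕ} :
    ![a, b, c, e] ≤ α ↔ a ≤ α 0 ∧ b ≤ α 1 ∧ c ≤ α 2 ∧ e ≤ α 3 := by
  simp [Pi.le_def, Fin.forall_fin_succ]

theorem le_vec_iff {a b c e : ℕ} {α : Fin 4 → ℕ} :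
    α ≤ ![a, b, c, e] ↔ α 0 ≤ a ∧ α 1 ≤ b ∧ α 2 ≤ c ∧ α 3 ≤ e := by
  simp [Pi.le_def, Fin.forall_fin_succ]

theorem fin4_ext_iff {α β : Fin 4 → ℕ} :
    α = β ↔ α 0 = β 0 ∧ α 1 = β 1 ∧ α 2 = β 2 ∧ α 3 = β 3 := by
  simp [funext_iff, Fin.forall_fin_succ]

theorem eq_vec_iff {a b c e : ℕ} {α : Fin 4 → ℕ} :
    α = ![a, b, c, e] ↔ α 0 = a ∧ α 1 = b ∧ α 2 = c ∧ α 3 = e := by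
  simp [fin4_ext_iff]

theorem exists_graverPair_le_of_lex_lt {α β : Fin 4 → ℕ}
    (hrel : (∑ i, (α i : ℤ) • oscillator i) = ∑ i, (β i : ℤ) • oscillator i)
    (hlt : α 2 < β 2 ∨ α 2 = β 2 ∧ α 3 < β 3) :
    ∃ p ∈ graverPairs, p.1 ≤ α ∧ p.2 ≤ β := by
  rw [sum_smul_oscillator_eq_iff] at hrel
  -- with `t = β 2 - α 2` and `s = β 3 - α 3`, `hrel` says `α 0 - β 0 = t`, `α 1 - β 1 = 2t + 3s`
  have pick : ∀ γ δ, (γ, δ) ∈ graverPairs → γ ≤ α → δ ≤ β →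
      ∃ p ∈ graverPairs, p.1 ≤ α ∧ p.2 ≤ β :=
    fun γ δ hmem hγ hδ => ⟨(γ, δ), hmem, hγ, hδ⟩
  rcases hlt with ht | ⟨ht, hs⟩
  · obtain hd | hd | hd | hd : 2 ≤ (α 1 : ℤ) - β 1 ∨ (α 1 : ℤ) - β 1 = 1 ∨
        (α 1 : ℤ) - β 1 = 0 ∨ (α 1 : ℤ) - β 1 < 0 := by omega
    · refine pick ![1, 2, 0, 0] ![0, 0, 1, 0] (by simp [graverPairs]) ?_ ?_ <;>
        simp only [vec_le_iff] <;> omega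
    · refine pick ![2, 1, 0, 1] ![0, 0, 2, 0] (by simp [graverPairs]) ?_ ?_ <;>
        simp only [vec_le_iff] <;> omega
    · refine pick ![3, 0, 0, 2] ![0, 0, 3, 0] (by simp [graverPairs]) ?_ ?_ <;>
        simp only [vec_le_iff] <;> omega
    · refine pick ![1, 0, 0, 1] ![0, 1, 1, 0] (by simp [graverPairs]) ?_ ?_ <;>
        simp only [vec_le_iff] <;> omega
  · refine pick ![0, 3, 0, 0] ![0, 0, 0, 1] (by simp [graverPairs]) ?_ ?_ <;>
      simp only [vec_le_iff] <;> omega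

theorem exists_graverPair_le {α β : Fin 4 → ℕ} (hne : α ≠ β)
    (hrel : (∑ i, (α i : ℤ) • oscillator i) = ∑ i, (β i : ℤ) • oscillator i) :
    ∃ p ∈ graverPairs, p.1 ≤ α ∧ p.2 ≤ β ∨ p.1 ≤ β ∧ p.2 ≤ α := by
  have hlex : (α 2 < β 2 ∨ α 2 = β 2 ∧ α 3 < β 3) ∨ (β 2 < α 2 ∨ β 2 = α 2 ∧ β 3 < α 3) := by
    rw [sum_smul_oscillator_eq_iff] at hrel
    by_contra
    exact hne (fin4_ext_iff.2 (by omega))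
  rcases hlex with hlt | hlt
  · obtain ⟨p, hp, hle⟩ := exists_graverPair_le_of_lex_lt hrel hlt
    exact ⟨p, hp, Or.inl hle⟩
  · obtain ⟨p, hp, hle⟩ := exists_graverPair_le_of_lex_lt hrel.symm hlt
    exact ⟨p, hp, Or.inr hle⟩

theorem isPrimitiveBinomial_oscillator_of_mem {γ δ : Fin 4 → ℕ} (h : (γ, δ) ∈ graverPairs) :
    IsPrimitiveBinomial oscillator γ δ := by
  simp only [graverPairs, Set.mem_insert_iff, Set.mem_singleton_iff, Prod.mk.injEq] at h
  rcases h with ⟨rfl, rfl⟩ | ⟨rfl, rfl⟩ | ⟨rfl, rfl⟩ | ⟨rfl, rfl⟩ | ⟨rfl, rfl⟩ <;>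
  · refine ⟨by decide, (sum_smul_oscillator_eq_iff _ _).2 (by decide),
      fun α β hne hrel hα hβ => ?_⟩
    rw [sum_smul_oscillator_eq_iff] at hrel
    rw [← Pi.le_def, le_vec_iff] at hα hβ
    rw [Ne, fin4_ext_iff] at hne
    simp only [eq_vec_iff]
    omega

/-- The Graver basis of the toric ideal of the `2×4` matrix with columns
`(1,0), (0,1), (1,2), (0,3)` consists exactly (up to sign) of the five binomials
`y₁y₂² - y₃`, `y₂³ - y₄`, `y₁y₄ - y₂y₃`, `y₁²y₂y₄ - y₃²`, `y₁³y₄² - y₃³`. -/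
theorem graver_basis_single_oscillator (α β : Fin 4 → ℕ) :
    IsPrimitiveBinomial (![![1, 0], ![0, 1], ![1, 2], ![0, 3]] : Fin 4 → Fin 2 → ℤ) α β ↔
      ((α, β) ∈ ({(![1, 2, 0, 0], ![0, 0, 1, 0]), (![0, 3, 0, 0], ![0, 0, 0, 1]),
          (![1, 0, 0, 1], ![0, 1, 1, 0]), (![2, 1, 0, 1], ![0, 0, 2, 0]),
          (![3, 0, 0, 2], ![0, 0, 3, 0])} : Set ((Fin 4 → ℕ) × (Fin 4 → ℕ))) ∨
        (β, α) ∈ ({(![1, 2, 0, 0], ![0, 0, 1, 0]), (![0, 3, 0, 0], ![0, 0, 0, 1]),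
          (![1, 0, 0, 1], ![0, 1, 1, 0]), (![2, 1, 0, 1], ![0, 0, 2, 0]),
          (![3, 0, 0, 2], ![0, 0, 3, 0])} : Set ((Fin 4 → ℕ) × (Fin 4 → ℕ)))) := by
  change IsPrimitiveBinomial oscillator α β ↔ (α, β) ∈ graverPairs ∨ (β, α) ∈ graverPairs
  refine ⟨fun h => ?_, ?_⟩
  · obtain ⟨⟨γ, δ⟩, hmem, ⟨hγ, hδ⟩ | ⟨hγ, hδ⟩⟩ := exists_graverPair_le h.1 h.2.1
    · obtain ⟨rfl, rfl⟩ := h.eq_of_le (isPrimitiveBinomial_oscillator_of_mem hmem) hγ hδ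
      exact Or.inl hmem
    · obtain ⟨rfl, rfl⟩ := h.symm.eq_of_le (isPrimitiveBinomial_oscillator_of_mem hmem) hγ hδ
      exact Or.inr hmem
  · rintro (h | h)
    exacts [isPrimitiveBinomial_oscillator_of_mem h, (isPrimitiveBinomial_oscillator_of_mem h).symm]
end
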